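/- Fix k ≥ 1 and n ≥ 2, and consider the Algorithm 3 transition system. Define Total(c) = ∑_{i} (secret of agent i, taken as 0 if none) + ∑_{i with label S'} (mask of agent i, taken as 0 if none), computed in ZMod k. Then Total(c') = Total(c) for every single step c → c' of types (R1), (R2), (R3), or (R4). -/

import Mathlib

/-- Labels of Algorithm 3. -/
inductive Alg3.Label : Type
  | S | S' | R | u | ubar
deriving DecidableEq

/-- Agent state of Algorithm 3: a secret, a mask, and a label. -/
structure Alg3.AgentState (k : ℕ) : Type where
  secret : Option (ZMod k)
  mask : Option (ZMod k)
  label : Alg3.Label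

/-- A configuration: the state of each of the `n` agents. -/
abbrev Alg3.Config (k n : ℕ) : Type := Fin n → Alg3.AgentState k

open Alg3 in
/-- A single step of Algorithm 3 between a distinct initiator `i` and responder `j`. -/
inductive Alg3.Step (k n : ℕ) : Config k n → Config k n → Prop
  | r1 (c : Config k n) (i j : Fin n) (hij : i ≠ j) (σ : Option (ZMod k)) (r r' : ZMod k)
      (hi : c i = ⟨σ, some r, Label.S⟩) (hj : (c j).label = Label.ubar) :
      Step k n c (Function.update c i ⟨σ, some r', Label.S⟩)
  | r2 (c : Config k n) (i j : Fin n) (hij : i ≠ j) (μ r v : ZMod k) (ρj : Option (ZMod k))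
      (hi : c i = ⟨some μ, some r, Label.S⟩) (hj : c j = ⟨some v, ρj, Label.u⟩) :
      Step k n c (Function.update (Function.update c i ⟨none, some (μ - r), Label.S'⟩)
        j ⟨some (v + r), ρj, Label.R⟩)
  | r3 (c : Config k n) (i j : Fin n) (hij : i ≠ j) (x y : ZMod k) (ρj : Option (ZMod k))
      (hi : c i = ⟨none, some x, Label.S'⟩) (hj : c j = ⟨some y, ρj, Label.R⟩) :
      Step k n c (Function.update (Function.update c i ⟨none, none, Label.ubar⟩)
        j ⟨some (x + y), ρj, Label.S⟩)
  | r4 (c : Config k n) (i j : Fin n) (hij : i ≠ j) (hi : (c i).label = Label.ubar) :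
      Step k n c (Function.update c i ⟨(c i).secret, (c i).mask, Label.u⟩)

/-- Reachability: the reflexive–transitive closure of single steps. -/
def Alg3.Reachable (k n : ℕ) : Alg3.Config k n → Alg3.Config k n → Prop :=
  Relation.ReflTransGen (Alg3.Step k n)

/-! `Total` is the sum over agents of a per-agent contribution, and each rule only moves value
between the (at most two) agents it touches: in (R2) the initiator keeps `μ - r` as its
outstanding mask while the responder receives `r`, and in (R3) that mask `x` is handed on. -/

section UpdateSum

variable {ι α M : Type*} [Fintype ι] [DecidableEq ι] [AddCommMonoid M]

theorem Fintype.sum_comp_update_add (w : α → M) (c : ι → α) (i : ι) (a : α) :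
    ∑ x, w (Function.update c i a x) + w (c i) = ∑ x, w (c x) + w a := by
  simp only [← Function.comp_apply (f := w), Function.comp_update,
    Finset.sum_update_of_mem (Finset.mem_univ i)]
  rw [Finset.sum_eq_add_sum_sdiff_singleton_of_mem (Finset.mem_univ i) (w ∘ c)]
  ac_rfl

theorem Fintype.sum_comp_update_update_add (w : α → M) (c : ι → α) {i j : ι} (hij : i ≠ j)
    (a b : α) :
    ∑ x, w (Function.update (Function.update c i a) j b x) + w (c i) + w (c j) =
      ∑ x, w (c x) + w a + w b := by
  have h := sum_comp_update_add w (Function.update c i a) j b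
  rw [Function.update_of_ne hij.symm] at h
  rw [add_right_comm, h, add_right_comm, sum_comp_update_add]

end UpdateSum

namespace Alg3

def AgentState.contribution {k : ℕ} (s : AgentState k) : ZMod k :=
  s.secret.getD 0 + if s.label = Label.S' then s.mask.getD 0 else 0

theorem sum_contribution {k n : ℕ} (c : Config k n) :
    ∑ i, (c i).contribution =
      (∑ i : Fin n, (c i).secret.getD 0) +
        ∑ i ∈ Finset.univ.filter (fun i => (c i).label = Label.S'), (c i).mask.getD 0 := by
  rw [Finset.sum_filter, ← Finset.sum_add_distrib]
  rfl

theorem Step.sum_contribution_eq {k n : ℕ} {c c' : Config k n} (h : Step k n c c') :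
    ∑ i, (c' i).contribution = ∑ i, (c i).contribution := by
  cases h with
  | r1 i _ _ σ r r' hi =>
    refine add_right_cancel (b := (c i).contribution) ?_
    rw [Fintype.sum_comp_update_add, hi]
    simp [AgentState.contribution]
  | r2 i j hij μ r v ρj hi hj =>
    refine add_right_cancel (b := (c i).contribution + (c j).contribution) ?_
    rw [← add_assoc, Fintype.sum_comp_update_update_add _ _ hij, hi, hj]
    simp only [AgentState.contribution, Option.getD_none, Option.getD_some, ↓reduceIte,
      reduceCtorEq, zero_add, add_zero]
    ring
  | r3 i j hij x y ρj hi hj =>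
    refine add_right_cancel (b := (c i).contribution + (c j).contribution) ?_
    rw [← add_assoc, Fintype.sum_comp_update_update_add _ _ hij, hi, hj]
    simp [AgentState.contribution]
  | r4 i _ _ hi =>
    refine add_right_cancel (b := (c i).contribution) ?_
    rw [Fintype.sum_comp_update_add]
    simp [AgentState.contribution, hi]

end Alg3

open Alg3 in
theorem stmt7_general (k n : ℕ)
    (Total : Config k n → ZMod k)
    (hTotal : ∀ c : Config k n, Total c =
      (∑ i : Fin n, (c i).secret.getD 0) +
      (∑ i ∈ Finset.univ.filter (fun i => (c i).label = Label.S'), (c i).mask.getD 0))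
    (c c' : Config k n) (hstep : Step k n c c') :
    Total c' = Total c := by
  rw [hTotal, hTotal, ← sum_contribution, ← sum_contribution]
  exact hstep.sum_contribution_eq

open Alg3 in
/-- The aggregate `Total(c) = ∑ secrets + ∑_{label S'} masks` (missing values count
as `0`, arithmetic in `ZMod k`) is preserved by every single step of Algorithm 3. -/
theorem stmt7 (k n : ℕ) (hk : 1 ≤ k) (hn : 2 ≤ n)
    (Total : Config k n → ZMod k)
    (hTotal : ∀ c : Config k n, Total c =
      (∑ i : Fin n, (c i).secret.getD 0) +
      (∑ i ∈ Finset.univ.filter (fun i => (c i).label = Label.S'), (c i).mask.getD 0))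
    (c c' : Config k n) (hstep : Step k n c c') :
    Total c' = Total c :=
  stmt7_general k n Total hTotal c c' hstep
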